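/- arXiv:2402.19174 — 3 statements merged into one kernel-verified Lean document; each statement's English description precedes it below -/
import Mathlib

section
/- Fix a Littlewood–Richardson filling of the skew shape λ/λ₁ of content λ₂, where λ₁ has at most d columns. Define ψ on cells of λ/λ₁ by ψ(r,s) = (i, d+j) if cell (r,s) contains the j-th occurrence (from the left) of the entry i. Then ψ is a bijection from the cells of λ/λ₁ to the cells of the skew shape ν/d^{ℓ(λ₂)} where ν = d^{ℓ(λ₂)} ++ λ₂, and for every cell (r,s) of λ/λ₁ one has s − r ≤ (d+j) − i. -/
/- ψ records, for each cell, its entry `i` and the rank `j` of its occurrence of `i`; it is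
injective because equal entries never share a column, and it fills row `i` of `λ₂` because entry
`i` occurs `(λ₂)ᵢ` times. For the content inequality: the lattice property forces every `i + 1`
to lie strictly below some `i`, so (counting rows and entries from 1) entries in row `r` are at
most `r` and cells left of column `d` are harmless. From column `d` on, `λ₁` is empty, so row `r`
of `λ` is full there and column strictness forces every such entry to be exactly `r`; a cell in
column `s ≥ d` is then preceded by `s - d` occurrences of `r` in row `r`, which gives
`j ≥ s - d + 1`. -/

noncomputable section
attribute [local instance] Classical.propDecidable

/-- A Littlewood–Richardson filling of the skew shape `lam / lam1` of content `lam2`: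
a semistandard filling (entries ≥ 1, weakly increasing along rows, strictly increasing
down columns) whose number of entries equal to `i` is the `i`-th part of `lam2`, and
whose reverse reading word (rows read right to left, top to bottom) is a lattice word.
Cells are 0-indexed. -/
def IsLRFilling (lam lam1 lam2 : YoungDiagram) (F : ℕ × ℕ → ℕ) : Prop :=
  lam1.cells ⊆ lam.cells ∧
  (∀ c ∈ lam.cells \ lam1.cells, 1 ≤ F c) ∧
  (∀ r s₁ s₂, (r, s₁) ∈ lam.cells \ lam1.cells → (r, s₂) ∈ lam.cells \ lam1.cells →
      s₁ ≤ s₂ → F (r, s₁) ≤ F (r, s₂)) ∧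
  (∀ r₁ r₂ s, (r₁, s) ∈ lam.cells \ lam1.cells → (r₂, s) ∈ lam.cells \ lam1.cells →
      r₁ < r₂ → F (r₁, s) < F (r₂, s)) ∧
  (∀ i, 1 ≤ i →
      ((lam.cells \ lam1.cells).filter (fun c => F c = i)).card = lam2.rowLen (i - 1)) ∧
  (∀ r s i, 1 ≤ i →
      ((lam.cells \ lam1.cells).filter
          (fun c => (c.1 < r ∨ (c.1 = r ∧ s ≤ c.2)) ∧ F c = i + 1)).card ≤
      ((lam.cells \ lam1.cells).filter
          (fun c => (c.1 < r ∨ (c.1 = r ∧ s ≤ c.2)) ∧ F c = i)).card)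

/-- For a cell `c` of the skew shape carrying entry `i = F c`, the rank `j` of its
occurrence of `i` from the left (occurrences of a given entry lie in distinct columns). -/
def occRank (lam lam1 : YoungDiagram) (F : ℕ × ℕ → ℕ) (c : ℕ × ℕ) : ℕ :=
  ((lam.cells \ lam1.cells).filter (fun c' => F c' = F c ∧ c'.2 ≤ c.2)).card

/-- The map ψ of STATEMENT 6 (0-indexed): a cell containing the `j`-th occurrence of
entry `i` is sent to the cell `(i, d+j)` (1-indexed), i.e. `(i-1, d+j-1)` (0-indexed). -/
def psiMap (lam lam1 : YoungDiagram) (F : ℕ × ℕ → ℕ) (d : ℕ) (c : ℕ × ℕ) : ℕ × ℕ :=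
  (F c - 1, d + occRank lam lam1 F c - 1)

theorem YoungDiagram.notMem_of_rowLen_zero_le {μ : YoungDiagram} {r s : ℕ} (hs : μ.rowLen 0 ≤ s) :
    (r, s) ∉ μ := by
  rw [YoungDiagram.mem_iff_lt_rowLen]
  have := μ.rowLen_anti 0 r r.zero_le
  omega

theorem YoungDiagram.mem_cells_sdiff_of_rowLen_zero_le {μ ν : YoungDiagram} {r s : ℕ}
    (hs : ν.rowLen 0 ≤ s) (h : (r, s) ∈ μ) : (r, s) ∈ μ.cells \ ν.cells := by
  simpa [h] using YoungDiagram.notMem_of_rowLen_zero_le hs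

section

variable {lam lam1 : YoungDiagram} {F : ℕ × ℕ → ℕ}

theorem occRank_pos {c : ℕ × ℕ} (hc : c ∈ lam.cells \ lam1.cells) : 0 < occRank lam lam1 F c :=
  Finset.card_pos.mpr ⟨c, Finset.mem_filter.mpr ⟨hc, rfl, le_rfl⟩⟩

theorem occRank_lt_occRank {c c' : ℕ × ℕ} (hc' : c' ∈ lam.cells \ lam1.cells) (hFc : F c = F c')
    (hlt : c.2 < c'.2) : occRank lam lam1 F c < occRank lam lam1 F c' := by
  refine Finset.card_lt_card (Finset.ssubset_iff_of_subset ?_ |>.mpr ⟨c', ?_, ?_⟩)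
  · intro x hx
    simp only [Finset.mem_filter] at hx ⊢
    exact ⟨hx.1, hx.2.1.trans hFc, hx.2.2.trans hlt.le⟩
  · exact Finset.mem_filter.mpr ⟨hc', rfl, le_rfl⟩
  · simp only [Finset.mem_filter, not_and, not_le]
    exact fun _ _ => hlt

end

namespace IsLRFilling

variable {lam lam1 lam2 : YoungDiagram} {F : ℕ × ℕ → ℕ}

theorem occRank_le_rowLen (hF : IsLRFilling lam lam1 lam2 F) {c : ℕ × ℕ}
    (hc : c ∈ lam.cells \ lam1.cells) : occRank lam lam1 F c ≤ lam2.rowLen (F c - 1) := by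
  rw [← hF.2.2.2.2.1 (F c) (hF.2.1 c hc)]
  exact Finset.card_le_card fun x hx => by
    rw [Finset.mem_filter] at hx ⊢
    exact ⟨hx.1, hx.2.1⟩

theorem eq_of_occRank_eq (hF : IsLRFilling lam lam1 lam2 F) {c c' : ℕ × ℕ}
    (hc : c ∈ lam.cells \ lam1.cells) (hc' : c' ∈ lam.cells \ lam1.cells) (hFc : F c = F c')
    (hocc : occRank lam lam1 F c = occRank lam lam1 F c') : c = c' := by
  have hcol : c.2 = c'.2 := by
    by_contra hne
    rcases Nat.lt_or_gt_of_ne hne with h | h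
    · exact (occRank_lt_occRank hc' hFc h).ne hocc
    · exact (occRank_lt_occRank hc hFc.symm h).ne hocc.symm
  obtain ⟨r, s⟩ := c
  obtain ⟨r', s'⟩ := c'
  obtain rfl : s = s' := hcol
  obtain rfl : r = r' := by
    by_contra hne
    rcases Nat.lt_or_gt_of_ne hne with h | h
    · exact (hF.2.2.2.1 r r' s hc hc' h).ne hFc
    · exact (hF.2.2.2.1 r' r s hc' hc h).ne hFc.symm
  rfl

theorem exists_occRank_eq (hF : IsLRFilling lam lam1 lam2 F) {i j : ℕ} (hi : 1 ≤ i)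
    (hj : j ∈ Finset.Icc 1 (lam2.rowLen (i - 1))) :
    ∃ c ∈ lam.cells \ lam1.cells, F c = i ∧ occRank lam lam1 F c = j := by
  obtain ⟨c, hc, hocc⟩ := Finset.surj_on_of_inj_on_of_card_le
    (s := (lam.cells \ lam1.cells).filter (fun c => F c = i))
    (t := Finset.Icc 1 (lam2.rowLen (i - 1))) (fun c _ => occRank lam lam1 F c)
    (fun c hc => by
      rw [Finset.mem_filter] at hc
      have := hF.occRank_le_rowLen hc.1
      rw [hc.2] at this
      exact Finset.mem_Icc.mpr ⟨occRank_pos hc.1, this⟩)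
    (fun c c' hc hc' => by
      rw [Finset.mem_filter] at hc hc'
      exact hF.eq_of_occRank_eq hc.1 hc'.1 (hc.2.trans hc'.2.symm))
    (by rw [Nat.card_Icc, hF.2.2.2.2.1 i hi]; omega) j hj
  rw [Finset.mem_filter] at hc
  exact ⟨c, hc.1, hc.2, hocc.symm⟩

theorem exists_pred_in_higher_row (hF : IsLRFilling lam lam1 lam2 F) {i : ℕ} (hi : 1 ≤ i)
    {c : ℕ × ℕ} (hc : c ∈ lam.cells \ lam1.cells) (hFc : F c = i + 1) :
    ∃ c' ∈ lam.cells \ lam1.cells, F c' = i ∧ c'.1 < c.1 := by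
  obtain ⟨-, -, hrow, -, -, hlattice⟩ := hF
  obtain ⟨r, s⟩ := c
  have hwitness : 0 < ((lam.cells \ lam1.cells).filter
      (fun c' => (c'.1 < r ∨ (c'.1 = r ∧ s ≤ c'.2)) ∧ F c' = i)).card :=
    (Finset.card_pos.mpr ⟨(r, s), by simp [hc, hFc]⟩).trans_le (hlattice r s i hi)
  obtain ⟨⟨r', s'⟩, hc'⟩ := Finset.card_pos.mp hwitness
  simp only [Finset.mem_filter] at hc'
  obtain ⟨hc'S, hr' | ⟨rfl, hs⟩, hFc'⟩ := hc'
  · exact ⟨_, hc'S, hFc', hr'⟩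
  · have := hrow r' s s' hc hc'S hs
    omega

theorem le_row_add_one (hF : IsLRFilling lam lam1 lam2 F) {c : ℕ × ℕ}
    (hc : c ∈ lam.cells \ lam1.cells) : F c ≤ c.1 + 1 := by
  suffices h : ∀ n, ∀ c ∈ lam.cells \ lam1.cells, F c = n + 1 → n ≤ c.1 by
    have := h (F c - 1) c hc (by have := hF.2.1 c hc; omega)
    omega
  intro n
  induction n with
  | zero => exact fun _ _ _ => Nat.zero_le _
  | succ n ih =>
    intro c hc hFc
    obtain ⟨c', hc', hFc', hlt⟩ := hF.exists_pred_in_higher_row (by omega) hc hFc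
    have := ih c' hc' hFc'
    omega

theorem row_add_one_le (hF : IsLRFilling lam lam1 lam2 F) {d r s : ℕ}
    (hd : lam1.rowLen 0 ≤ d) (hs : d ≤ s) (h : (r, s) ∈ lam) : r + 1 ≤ F (r, s) := by
  have hskew {r : ℕ} (h : (r, s) ∈ lam) : (r, s) ∈ lam.cells \ lam1.cells :=
    YoungDiagram.mem_cells_sdiff_of_rowLen_zero_le (hd.trans hs) h
  induction r with
  | zero => exact hF.2.1 _ (hskew h)
  | succ r ih =>
    have hup : (r, s) ∈ lam := lam.up_left_mem r.le_succ le_rfl h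
    have := hF.2.2.2.1 r (r + 1) s (hskew hup) (hskew h) r.lt_succ_self
    have := ih hup
    omega

theorem eq_row_add_one (hF : IsLRFilling lam lam1 lam2 F) {d r s : ℕ}
    (hd : lam1.rowLen 0 ≤ d) (hs : d ≤ s) (h : (r, s) ∈ lam) : F (r, s) = r + 1 :=
  le_antisymm
    (hF.le_row_add_one (YoungDiagram.mem_cells_sdiff_of_rowLen_zero_le (hd.trans hs) h))
    (hF.row_add_one_le hd hs h)

theorem sub_add_one_le_occRank (hF : IsLRFilling lam lam1 lam2 F) {d r s : ℕ}
    (hd : lam1.rowLen 0 ≤ d) (hs : d ≤ s) (h : (r, s) ∈ lam) :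
    s + 1 - d ≤ occRank lam lam1 F (r, s) := by
  have hrow : (Finset.Icc d s).image (fun s' => (r, s')) ⊆
      (lam.cells \ lam1.cells).filter (fun c => F c = F (r, s) ∧ c.2 ≤ s) := by
    intro c hc
    obtain ⟨s', hs', rfl⟩ := Finset.mem_image.mp hc
    rw [Finset.mem_Icc] at hs'
    have h' : (r, s') ∈ lam := lam.up_left_mem le_rfl hs'.2 h
    refine Finset.mem_filter.mpr
      ⟨YoungDiagram.mem_cells_sdiff_of_rowLen_zero_le (hd.trans hs'.1) h', ?_, hs'.2⟩
    rw [hF.eq_row_add_one hd hs'.1 h', hF.eq_row_add_one hd hs h]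
  have := Finset.card_le_card hrow
  rwa [Finset.card_image_of_injective _ (Prod.mk_right_injective r), Nat.card_Icc] at this

theorem image_psiMap (hF : IsLRFilling lam lam1 lam2 F) (d : ℕ) :
    (lam.cells \ lam1.cells).image (psiMap lam lam1 F d) =
      lam2.cells.image (fun c => (c.1, d + c.2)) := by
  ext ⟨x, y⟩
  simp only [Finset.mem_image, psiMap, Prod.mk.injEq, YoungDiagram.mem_cells,
    YoungDiagram.mem_iff_lt_rowLen, Prod.exists]
  constructor
  · rintro ⟨r, s, hc, rfl, rfl⟩
    have := hF.2.1 _ hc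
    have := occRank_pos (F := F) hc
    have := hF.occRank_le_rowLen hc
    exact ⟨F (r, s) - 1, occRank lam lam1 F (r, s) - 1, by omega, rfl, by omega⟩
  · rintro ⟨i, j, hj, rfl, rfl⟩
    obtain ⟨⟨r, s⟩, hc, hFc, hocc⟩ := hF.exists_occRank_eq (i := i + 1) (j := j + 1) (by omega)
      (Finset.mem_Icc.mpr ⟨by omega, by simpa using hj⟩)
    exact ⟨r, s, hc, by omega, by omega⟩

theorem injOn_psiMap (hF : IsLRFilling lam lam1 lam2 F) (d : ℕ) :
    Set.InjOn (psiMap lam lam1 F d) ↑(lam.cells \ lam1.cells) := by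
  intro c hc c' hc' h
  simp only [psiMap, Prod.mk.injEq] at h
  have := hF.2.1 c hc
  have := hF.2.1 c' hc'
  have := occRank_pos (F := F) hc
  have := occRank_pos (F := F) hc'
  exact hF.eq_of_occRank_eq hc hc' (by omega) (by omega)

theorem content_le_content_psiMap (hF : IsLRFilling lam lam1 lam2 F) {d : ℕ}
    (hd : lam1.rowLen 0 ≤ d) {c : ℕ × ℕ} (hc : c ∈ lam.cells \ lam1.cells) :
    ((c.2 : ℤ) - (c.1 : ℤ)) ≤
      (((psiMap lam lam1 F d c).2 : ℤ) - ((psiMap lam lam1 F d c).1 : ℤ)) := by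
  obtain ⟨r, s⟩ := c
  have := hF.2.1 _ hc
  have := occRank_pos (F := F) hc
  have := hF.le_row_add_one hc
  simp only [psiMap]
  rcases Nat.lt_or_ge s d with hs | hs
  · omega
  · have := hF.sub_add_one_le_occRank hd hs (Finset.mem_sdiff.mp hc).1
    omega

end IsLRFilling

/-- fix an LR filling `F` of `lam / lam1` of content `lam2`, where `lam1`
has at most `d` columns.  Then `ψ` is a bijection from the cells of `lam / lam1` onto
the cells of the skew shape `ν / d^{ℓ(lam2)}` where `ν = d^{ℓ(lam2)} ++ lam2` (these
cells being exactly `{(r, d+s) : (r,s) ∈ lam2}`), and for every cell `c = (r,s)` of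
`lam / lam1`, the content satisfies `s − r ≤ (d+j) − i`, i.e. content of `c` is at most
content of `ψ c`. -/
theorem stmt6 (lam1 lam2 lam : YoungDiagram) (d : ℕ)
    (hd : lam1.rowLen 0 ≤ d)
    (F : ℕ × ℕ → ℕ) (hF : IsLRFilling lam lam1 lam2 F) :
    (lam.cells \ lam1.cells).image (psiMap lam lam1 F d) =
      lam2.cells.image (fun c => (c.1, d + c.2)) ∧
    Set.InjOn (psiMap lam lam1 F d) ↑(lam.cells \ lam1.cells) ∧
    ∀ c ∈ lam.cells \ lam1.cells,
      ((c.2 : ℤ) - (c.1 : ℤ)) ≤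
        (((psiMap lam lam1 F d c).2 : ℤ) - ((psiMap lam lam1 F d c).1 : ℤ)) :=
  ⟨hF.image_psiMap d, hF.injOn_psiMap d, fun _ hc => hF.content_le_content_psiMap hd hc⟩
end
end

section
/- The sum of all transpositions Σ_{(a,b)∈S_n} (a,b) acts on the Specht module S^λ, for λ a partition of n, as multiplication by the scalar C(λ) = Σ_{(r,s)∈λ} (s − r). -/
open Finset Equiv

noncomputable section
attribute [local instance] Classical.propDecidable

/-- The group algebra `ℂ[S_N]`.  All representations are over `ℂ`; a left ideal of the
group algebra is an `S_N`-representation via left multiplication. -/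
abbrev GA (N : ℕ) := MonoidAlgebra ℂ (Equiv.Perm (Fin N))

/-- A permutation as an element of the group algebra. -/
def ofP {N : ℕ} (σ : Equiv.Perm (Fin N)) : GA N :=
  MonoidAlgebra.of ℂ (Equiv.Perm (Fin N)) σ

/-- The sign of a permutation, as a complex scalar. -/
def sgnC {n : ℕ} (σ : Equiv.Perm (Fin n)) : ℂ := ((Equiv.Perm.sign σ : ℤ) : ℂ)

/-- The subgroup (as a finset) of permutations preserving the fibers of `h`
(e.g. the row or the column stabilizer of a tableau). -/
def stab {N : ℕ} (h : Fin N → ℕ) : Finset (Equiv.Perm (Fin N)) :=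
  Finset.univ.filter (fun σ => ∀ x, h (σ x) = h x)

/-- The Young symmetrizer of a tableau given by its row and column functions. -/
def youngSym {N : ℕ} (row col : Fin N → ℕ) : GA N :=
  (∑ σ ∈ stab col, sgnC σ • ofP σ) * (∑ σ ∈ stab row, ofP σ)

/-- `f` is a partition of `N`: a weakly decreasing sequence of row lengths, supported on
the first `N` values, with total sum `N`. -/
def IsPartitionN (f : ℕ → ℕ) (N : ℕ) : Prop :=
  Antitone f ∧ (∀ i, N ≤ i → f i = 0) ∧ ∑ i ∈ Finset.range N, f i = N

/-- `(row, col)` is a Young tableau of shape `f` on the letters `Fin N`: the letters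
occupy exactly the cells of the Young diagram of `f`, each cell once. -/
def IsTableau {N : ℕ} (f : ℕ → ℕ) (row col : Fin N → ℕ) : Prop :=
  Function.Injective (fun x => (row x, col x)) ∧
  ∀ r c : ℕ, (∃ x, row x = r ∧ col x = c) ↔ c < f r

/-- The Specht module `S^f`, realized as the left ideal of `ℂ[S_N]` generated by the
Young symmetrizer of a tableau of shape `f`. -/
def SpechtIdeal {N : ℕ} (row col : Fin N → ℕ) : Ideal (GA N) :=
  Ideal.span {youngSym row col}

/-- The length of the last column of the partition `f` (with at most `N` parts):
the number of parts equal to the largest part. -/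
def lastColLen (f : ℕ → ℕ) (N : ℕ) : ℕ :=
  ((Finset.range N).filter (fun i => f i = f 0)).card

/-- The number of (positive) parts of `f`, i.e. the length of its first column. -/
def numParts (f : ℕ → ℕ) (N : ℕ) : ℕ :=
  ((Finset.range N).filter (fun i => 0 < f i)).card

/-- The set of all transpositions in `S_N`. -/
def transpositions (N : ℕ) : Finset (Equiv.Perm (Fin N)) :=
  Finset.univ.filter (fun σ => σ.IsSwap)

/-
The sum `T` of all transpositions is central, so on `S^λ = ℂ[S_N] · b a` (with `b` the signed
column sum and `a` the row sum of a tableau) it acts through `b T a`. A transposition `τ` of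
two letters in one row is absorbed by `a`, one of two letters in one column is absorbed by `b`
with sign `-1`, and for any other `τ` there is a column transposition `t` with `τ t τ` a row
transposition, which forces `b τ a = -b τ a = 0`. Hence `T` acts by the number of row
transpositions minus the number of column transpositions. Ordering each pair by column (resp.
row), a letter `x` is the larger end of `col x` row pairs and of `row x` column pairs, so the
scalar is `∑ₓ (col x - row x)`, the sum of the contents.
-/

theorem MonoidAlgebra.commute_sum_of_of_conj_mem {k G : Type*} [CommSemiring k] [Group G]
    {s : Finset G} (hs : ∀ g, ∀ x ∈ s, g * x * g⁻¹ ∈ s) (y : MonoidAlgebra k G) :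
    Commute (∑ x ∈ s, of k G x) y := by
  induction y using MonoidAlgebra.induction_on with
  | of g =>
    refine (?_ : of k G g * _ = _ * of k G g).symm
    rw [mul_sum, sum_mul]
    simp_rw [← map_mul]
    refine sum_nbij' (fun x => g * x * g⁻¹) (fun x => g⁻¹ * x * g) (fun x hx => hs g x hx)
      (fun x hx => by simpa using hs g⁻¹ x hx) (fun x _ => by group) (fun x _ => by group)
      (fun x _ => by group)
  | add y z hy hz => exact hy.add_right hz
  | smul r y hy => exact hy.smul_right r

theorem mul_mul_eq_zero_of_mul_eq_neg {R : Type*} [Ring R] [IsAddTorsionFree R] {a b t τ p : R}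
    (hb : b * t = -b) (ha : p * a = a) (hτ : t * τ * p = τ) : b * τ * a = 0 := by
  refine self_eq_neg.mp ?_
  calc b * τ * a = b * (t * τ * p) * a := by rw [hτ]
    _ = b * t * τ * (p * a) := by simp only [mul_assoc]
    _ = -(b * τ * a) := by rw [hb, ha, neg_mul, neg_mul]

theorem Equiv.Perm.IsSwap.conj {α : Type*} [DecidableEq α] {σ : Perm α} (hσ : σ.IsSwap)
    (g : Perm α) : (g * σ * g⁻¹).IsSwap := by
  obtain ⟨a, b, hab, rfl⟩ := hσ
  exact ⟨g a, g b, g.injective.ne hab, (swap_apply_apply g a b).symm⟩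

theorem Equiv.eq_and_eq_of_swap_eq_swap {α γ : Type*} [DecidableEq α] [LinearOrder γ]
    {k : α → γ} {a b c d : α} (hab : k b < k a) (hcd : k d < k c) (h : swap a b = swap c d) :
    a = c ∧ b = d := by
  have hb : swap c d a = b := by rw [← h, swap_apply_left]
  rcases eq_or_ne a c with rfl | hac
  · exact ⟨rfl, by rwa [swap_apply_left, eq_comm] at hb⟩
  rcases eq_or_ne a d with rfl | had
  · rw [swap_apply_right] at hb
    subst hb
    order
  · rw [swap_apply_of_ne_of_ne hac had] at hb
    subst hb
    order

theorem card_filter_eq_of_forall_lt_exists {α : Type*} [Fintype α] {h k : α → ℕ}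
    (hinj : Function.Injective fun x => (h x, k x)) {a n : ℕ}
    (hocc : ∀ j < n, ∃ y, h y = a ∧ k y = j) : #{y | h y = a ∧ k y < n} = n := by
  conv_rhs => rw [← card_range n]
  refine card_bij (fun y _ => k y) (fun y hy => ?_) (fun y hy z hz hyz => ?_)
    (fun j hj => ?_)
  · exact mem_range.2 (mem_filter.1 hy).2.2
  · exact hinj (Prod.ext ((mem_filter.1 hy).2.1.trans (mem_filter.1 hz).2.1.symm) hyz)
  · obtain ⟨y, hy, rfl⟩ := hocc j (mem_range.1 hj)
    exact ⟨y, mem_filter.2 ⟨mem_univ y, hy, mem_range.1 hj⟩, rfl⟩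

section YoungSymmetrizer

variable {N : ℕ}

def rowSym (row : Fin N → ℕ) : GA N := ∑ σ ∈ stab row, ofP σ

def colAntisym (col : Fin N → ℕ) : GA N := ∑ σ ∈ stab col, sgnC σ • ofP σ

theorem youngSym_eq (row col : Fin N → ℕ) : youngSym row col = colAntisym col * rowSym row :=
  rfl

instance : IsAddTorsionFree (GA N) := .of_module_rat _

theorem ofP_mul_ofP (σ τ : Perm (Fin N)) : ofP σ * ofP τ = ofP (σ * τ) :=
  (map_mul _ σ τ).symm

theorem sgnC_mul (σ τ : Perm (Fin N)) : sgnC (σ * τ) = sgnC σ * sgnC τ := by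
  simp [sgnC]

theorem sgnC_mul_self (σ : Perm (Fin N)) : sgnC σ * sgnC σ = 1 := by
  rw [sgnC, ← Int.cast_mul, ← Units.val_mul, Int.units_mul_self, Units.val_one, Int.cast_one]

theorem sgnC_swap {x y : Fin N} (hxy : x ≠ y) : sgnC (swap x y) = -1 := by
  simp [sgnC, Perm.sign_swap hxy]

theorem mem_stab {h : Fin N → ℕ} {σ : Perm (Fin N)} : σ ∈ stab h ↔ ∀ x, h (σ x) = h x := by
  simp [stab]

theorem mul_mem_stab {h : Fin N → ℕ} {σ τ : Perm (Fin N)} (hσ : σ ∈ stab h) (hτ : τ ∈ stab h) :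
    σ * τ ∈ stab h :=
  mem_stab.2 fun x => by rw [Perm.mul_apply, mem_stab.1 hσ, mem_stab.1 hτ]

theorem inv_mem_stab {h : Fin N → ℕ} {σ : Perm (Fin N)} (hσ : σ ∈ stab h) : σ⁻¹ ∈ stab h :=
  mem_stab.2 fun x => by simpa using (mem_stab.1 hσ (σ⁻¹ x)).symm

theorem swap_mem_stab_iff {h : Fin N → ℕ} {x y : Fin N} : swap x y ∈ stab h ↔ h x = h y := by
  refine ⟨fun hs => by simpa using (mem_stab.1 hs x).symm, fun hxy => mem_stab.2 fun z => ?_⟩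
  rcases eq_or_ne z x with rfl | hzx
  · simp [hxy]
  rcases eq_or_ne z y with rfl | hzy
  · simp [hxy]
  · rw [swap_apply_of_ne_of_ne hzx hzy]

theorem mem_transpositions {σ : Perm (Fin N)} : σ ∈ transpositions N ↔ σ.IsSwap := by
  simp [transpositions]

theorem ofP_mul_rowSym {row : Fin N → ℕ} {p : Perm (Fin N)} (hp : p ∈ stab row) :
    ofP p * rowSym row = rowSym row := by
  rw [rowSym, mul_sum]
  simp_rw [ofP_mul_ofP]
  exact sum_nbij' (p * ·) (p⁻¹ * ·) (fun σ hσ => mul_mem_stab hp hσ)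
    (fun σ hσ => mul_mem_stab (inv_mem_stab hp) hσ) (fun σ _ => by group) (fun σ _ => by group)
    (fun _ _ => rfl)

theorem colAntisym_mul_ofP {col : Fin N → ℕ} {t : Perm (Fin N)} (ht : t ∈ stab col) :
    colAntisym col * ofP t = sgnC t • colAntisym col := by
  rw [colAntisym, sum_mul, smul_sum]
  simp_rw [smul_mul_assoc, ofP_mul_ofP, smul_smul]
  refine sum_nbij' (· * t) (· * t⁻¹) (fun σ hσ => mul_mem_stab hσ ht)
    (fun σ hσ => mul_mem_stab hσ (inv_mem_stab ht)) (fun σ _ => by group) (fun σ _ => by group)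
    (fun σ _ => ?_)
  rw [sgnC_mul, ← mul_assoc, mul_comm (sgnC t), mul_assoc, sgnC_mul_self, mul_one]

variable {f : ℕ → ℕ} {row col : Fin N → ℕ}

theorem IsTableau.col_lt (ht : IsTableau f row col) (x : Fin N) : col x < f (row x) :=
  (ht.2 _ _).1 ⟨x, rfl, rfl⟩

theorem colAntisym_mul_swap_mul_rowSym_of_lt (ht : IsTableau f row col) {x y : Fin N}
    (hr : row x ≠ row y) (hc : col x ≠ col y) (hyx : col y < f (row x)) :
    colAntisym col * ofP (swap x y) * rowSym row = 0 := by
  obtain ⟨z, hzr, hzc⟩ := (ht.2 (row x) (col y)).2 hyx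
  have hzx : z ≠ x := by rintro rfl; exact hc hzc
  have hzy : z ≠ y := by rintro rfl; exact hr hzr.symm
  refine mul_mul_eq_zero_of_mul_eq_neg (t := ofP (swap z y)) (p := ofP (swap x z)) ?_ ?_ ?_
  · rw [colAntisym_mul_ofP (swap_mem_stab_iff.2 hzc), sgnC_swap hzy, neg_one_smul]
  · exact ofP_mul_rowSym (swap_mem_stab_iff.2 hzr.symm)
  · have hp : swap x z = swap x y * swap z y * swap x y := by
      rw [swap_comm x y, swap_mul_swap_mul_swap hzy hzx]
    rw [ofP_mul_ofP, ofP_mul_ofP, hp]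
    simp [← mul_assoc]

theorem colAntisym_mul_swap_mul_rowSym_of_ne (ht : IsTableau f row col) {x y : Fin N}
    (hr : row x ≠ row y) (hc : col x ≠ col y) :
    colAntisym col * ofP (swap x y) * rowSym row = 0 := by
  by_cases hyx : col y < f (row x)
  · exact colAntisym_mul_swap_mul_rowSym_of_lt ht hr hc hyx
  · have hx := ht.col_lt x
    have hy := ht.col_lt y
    rw [swap_comm]
    exact colAntisym_mul_swap_mul_rowSym_of_lt ht hr.symm hc.symm (by omega)

theorem colAntisym_mul_ofP_mul_rowSym (ht : IsTableau f row col) {τ : Perm (Fin N)}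
    (hτ : τ.IsSwap) :
    colAntisym col * ofP τ * rowSym row =
      ((if τ ∈ stab row then 1 else 0) - (if τ ∈ stab col then 1 else 0) : ℂ) •
        youngSym row col := by
  obtain ⟨x, y, hxy, rfl⟩ := hτ
  simp only [swap_mem_stab_iff, youngSym_eq]
  by_cases hr : row x = row y
  · have hc : col x ≠ col y := fun hc => hxy (ht.1 (Prod.ext hr hc))
    rw [if_pos hr, if_neg hc, sub_zero, one_smul, mul_assoc,
      ofP_mul_rowSym (swap_mem_stab_iff.2 hr)]
  by_cases hc : col x = col y
  · rw [if_neg hr, if_pos hc, zero_sub, colAntisym_mul_ofP (swap_mem_stab_iff.2 hc),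
      sgnC_swap hxy, smul_mul_assoc]
  · rw [if_neg hr, if_neg hc, sub_zero, zero_smul,
      colAntisym_mul_swap_mul_rowSym_of_ne ht hr hc]

theorem commute_sum_transpositions (y : GA N) :
    Commute (∑ σ ∈ transpositions N, ofP σ) y :=
  MonoidAlgebra.commute_sum_of_of_conj_mem
    (fun g _ hσ => mem_transpositions.2 ((mem_transpositions.1 hσ).conj g)) y

theorem sum_transpositions_mul_youngSym (ht : IsTableau f row col) :
    (∑ σ ∈ transpositions N, ofP σ) * youngSym row col =
      ((#{σ ∈ transpositions N | σ ∈ stab row} : ℂ) - #{σ ∈ transpositions N | σ ∈ stab col}) •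
        youngSym row col := by
  calc (∑ σ ∈ transpositions N, ofP σ) * youngSym row col
      = ∑ σ ∈ transpositions N, colAntisym col * ofP σ * rowSym row := by
        rw [youngSym_eq, ← mul_assoc, (commute_sum_transpositions _).eq, mul_sum,
          sum_mul]
    _ = _ := by
        rw [sum_congr rfl fun σ hσ => colAntisym_mul_ofP_mul_rowSym ht
          (mem_transpositions.1 hσ), ← sum_smul, sum_sub_distrib,
          sum_boole, sum_boole]

end YoungSymmetrizer

section Counting

variable {N : ℕ}

theorem card_transpositions_stab {h k : Fin N → ℕ}
    (hinj : Function.Injective fun x => (h x, k x)) :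
    #{σ ∈ transpositions N | σ ∈ stab h} = ∑ x, #{y | h y = h x ∧ k y < k x} := by
  have hpairs : ∑ x, #{y | h y = h x ∧ k y < k x} =
      #{p : Fin N × Fin N | h p.2 = h p.1 ∧ k p.2 < k p.1} := by
    simp only [card_filter, Fintype.sum_prod_type]
  rw [hpairs]
  symm
  refine card_bij (fun p _ => swap p.1 p.2) (fun p hp => ?_) (fun p hp q hq hpq => ?_) ?_
  · simp only [mem_filter, mem_univ, true_and] at hp ⊢
    exact ⟨mem_transpositions.2 ⟨p.1, p.2, fun he => hp.2.ne (he ▸ rfl), rfl⟩,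
      swap_mem_stab_iff.2 hp.1.symm⟩
  · simp only [mem_filter, mem_univ, true_and] at hp hq
    obtain ⟨h1, h2⟩ := Equiv.eq_and_eq_of_swap_eq_swap hp.2 hq.2 hpq
    exact Prod.ext h1 h2
  · intro σ hσ
    obtain ⟨hσ, hs⟩ := mem_filter.1 hσ
    obtain ⟨x, y, hxy, rfl⟩ := mem_transpositions.1 hσ
    have hr : h x = h y := swap_mem_stab_iff.1 hs
    have hk : k x ≠ k y := fun hk => hxy (hinj (Prod.ext hr hk))
    rcases hk.lt_or_gt with hlt | hgt
    · exact ⟨(y, x), by simp [hr, hlt], swap_comm y x⟩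
    · exact ⟨(x, y), by simp [hr, hgt], rfl⟩

variable {f : ℕ → ℕ} {row col : Fin N → ℕ}

theorem IsTableau.card_row_eq_col_lt (ht : IsTableau f row col) (x : Fin N) :
    #{y | row y = row x ∧ col y < col x} = col x :=
  card_filter_eq_of_forall_lt_exists ht.1 fun _ hj => (ht.2 _ _).2 (hj.trans (ht.col_lt x))

theorem IsTableau.card_col_eq_row_lt (ht : IsTableau f row col) (hf : Antitone f) (x : Fin N) :
    #{y | col y = col x ∧ row y < row x} = row x :=
  card_filter_eq_of_forall_lt_exists (Prod.swap_injective.comp ht.1) fun j hj => by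
    obtain ⟨y, hyr, hyc⟩ := (ht.2 j (col x)).2 ((ht.col_lt x).trans_le (hf hj.le))
    exact ⟨y, hyc, hyr⟩

theorem IsTableau.row_lt (ht : IsTableau f row col) (hf : ∀ i, N ≤ i → f i = 0) (x : Fin N) :
    row x < N := by
  by_contra hx
  have := ht.col_lt x
  rw [hf _ (not_lt.1 hx)] at this
  omega

theorem IsTableau.sum_content (ht : IsTableau f row col) (hf : ∀ i, N ≤ i → f i = 0) :
    ∑ r ∈ range N, ∑ s ∈ range (f r), ((s : ℤ) - r) = ∑ x, ((col x : ℤ) - row x) := by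
  rw [sum_sigma']
  symm
  refine sum_bij (fun x _ => ⟨row x, col x⟩) (fun x _ => ?_) (fun x _ y _ hxy => ?_)
    (fun c hc => ?_) (fun _ _ => rfl)
  · simp [ht.row_lt hf x, ht.col_lt x]
  · simp only [Sigma.mk.inj_iff, heq_eq_eq] at hxy
    exact ht.1 (Prod.ext hxy.1 hxy.2)
  · obtain ⟨x, hxr, hxc⟩ := (ht.2 c.1 c.2).2 (mem_range.1 (mem_sigma.1 hc).2)
    exact ⟨x, mem_univ x, by rw [hxr, hxc]⟩

end Counting

/-- the sum of all transpositions `Σ_{(a,b) ∈ S_N} (a,b)` acts on the Specht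
module `S^f` (for `f ⊢ N`) as multiplication by the scalar
`C(f) = Σ_{(r,s) ∈ f} (s − r)` (the contents being independent of 0/1-indexing). -/
theorem stmt8 (N : ℕ) (f : ℕ → ℕ) (hf : IsPartitionN f N)
    (row col : Fin N → ℕ) (ht : IsTableau f row col)
    (x : GA N) (hx : x ∈ SpechtIdeal row col) :
    (∑ σ ∈ transpositions N, ofP σ) * x =
      (((∑ r ∈ Finset.range N, ∑ s ∈ Finset.range (f r), ((s : ℤ) - (r : ℤ))) : ℤ) : ℂ) • x := by
  obtain ⟨y, rfl⟩ := Ideal.mem_span_singleton'.1 hx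
  have hcoef : ((#{σ ∈ transpositions N | σ ∈ stab row} : ℂ) -
      #{σ ∈ transpositions N | σ ∈ stab col}) =
      ((∑ r ∈ range N, ∑ s ∈ range (f r), ((s : ℤ) - r) : ℤ) : ℂ) := by
    rw [ht.sum_content hf.2.1, card_transpositions_stab ht.1,
      card_transpositions_stab (Prod.swap_injective.comp ht.1)]
    simp only [ht.card_row_eq_col_lt, ht.card_col_eq_row_lt hf.1]
    push_cast [sum_sub_distrib]
    rfl
  rw [← mul_assoc, (commute_sum_transpositions y).eq, mul_assoc,
    sum_transpositions_mul_youngSym ht, hcoef, mul_smul_comm]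
end
end

section
/- Let T ∈ 𝕋_{n,k} be a non-increasing plane rooted n-ary tree with k internal nodes, and let S be obtained from T by choosing internal nodes a (parent) and b (child of a) with μ_T(a) > μ_T(b), and exchanging all subtrees rooted at children of a other than b with the subtrees rooted at all but one child x of b. Then the depth vector of S is lexicographically strictly smaller than the depth vector of T. -/
/-!
The exchange changes nothing outside the subtree rooted at `a`, so the depth vectors agree down
to the depth of `a`. One level below, the new node `a` has at most `μ_T(b)` leaf children: its
children other than the new `b` (which is internal) are former children of `b` other than `x`.
Since `μ_T(b) < μ_T(a)`, `S` has fewer leaves than `T` at that depth.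
-/

/-- Plane rooted `n`-ary trees: every internal node has exactly `n` ordered children. -/
inductive NTree (n : ℕ) : Type
  | leaf : NTree n
  | node : (Fin n → NTree n) → NTree n

namespace NTree

/-- The number of internal nodes; `T ∈ 𝕋_{n,k}` means `internals T = k`. -/
def internals {n : ℕ} : NTree n → ℕ
  | leaf => 0
  | node c => 1 + ∑ i, internals (c i)

/-- Boolean test for being a leaf. -/
def isLeafB {n : ℕ} : NTree n → Bool
  | leaf => true
  | node _ => false

/-- `μ_T(a)`: the number of children of an internal node (given by its children function
`c`) that are leaves. -/
def muNode {n : ℕ} (c : Fin n → NTree n) : ℕ :=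
  (Finset.univ.filter (fun i => isLeafB (c i) = true)).card

/-- The number of leaves of a tree at depth `d`. -/
def leavesAtDepth {n : ℕ} : NTree n → ℕ → ℕ
  | leaf => fun d => if d = 0 then 1 else 0
  | node c => fun d =>
      match d with
      | 0 => 0
      | d + 1 => ∑ i, leavesAtDepth (c i) d

/-- Strict lexicographic order on depth vectors (as functions `ℕ → ℕ`, padded with 0). -/
def LexLt (u v : ℕ → ℕ) : Prop :=
  ∃ m, (∀ i, i < m → u i = v i) ∧ u m < v m

/-- The exchange of STATEMENT 16, performed at the root of `t`: `t = node ca` is the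
internal node `a`, its child `b = ca i₀ = node cb` is internal with `μ(b) < μ(a)`, and
`s` is obtained by exchanging all subtrees rooted at the children of `a` other than `b`
with the subtrees rooted at all children of `b` but one (the child `x = cb j₀`). -/
def LocalExchange {n : ℕ} (t s : NTree n) : Prop :=
  ∃ (ca cb cb' : Fin n → NTree n) (i₀ j₀ : Fin n)
    (e : {i : Fin n // i ≠ i₀} ≃ {j : Fin n // j ≠ j₀}),
    t = node ca ∧ ca i₀ = node cb ∧ muNode cb < muNode ca ∧
    (∀ j : Fin n, cb' j = if h : j = j₀ then cb j₀ else ca ((e.symm ⟨j, h⟩) : Fin n)) ∧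
    s = node (fun i => if h : i = i₀ then node cb' else cb ((e ⟨i, h⟩) : Fin n))

/-- The exchange performed at an arbitrary internal node: the congruence closure of
`LocalExchange`. -/
inductive Exchange {n : ℕ} : NTree n → NTree n → Prop
  | base {t s : NTree n} : LocalExchange t s → Exchange t s
  | congr (c : Fin n → NTree n) (i : Fin n) {s' : NTree n} :
      Exchange (c i) s' → Exchange (node c) (node (Function.update c i s'))

section LexLt

variable {u v : ℕ → ℕ}

lemma lexLt_of_lt_zero (h : u 0 < v 0) : LexLt u v :=
  ⟨0, fun _ hi => absurd hi (Nat.not_lt_zero _), h⟩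

lemma LexLt.of_tail (h₀ : u 0 = v 0) (h : LexLt (fun d => u (d + 1)) (fun d => v (d + 1))) :
    LexLt u v := by
  obtain ⟨m, heq, hlt⟩ := h
  refine ⟨m + 1, fun i hi => ?_, hlt⟩
  cases i with
  | zero => exact h₀
  | succ i => exact heq i (by omega)

lemma LexLt.add_right (h : LexLt u v) (w : ℕ → ℕ) : LexLt (u + w) (v + w) := by
  obtain ⟨m, heq, hlt⟩ := h
  exact ⟨m, fun i hi => by simp only [Pi.add_apply, heq i hi], Nat.add_lt_add_right hlt _⟩

lemma LexLt.sum_update {ι : Type*} [Fintype ι] [DecidableEq ι] {F : ι → ℕ → ℕ} {i : ι}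
    (h : LexLt u (F i)) : LexLt (∑ j, Function.update F i u j) (∑ j, F j) := by
  rw [Finset.sum_update_of_mem (Finset.mem_univ i), ← Finset.add_sum_erase _ _ (Finset.mem_univ i),
    Finset.sdiff_singleton_eq_erase]
  exact h.add_right _

end LexLt

variable {n : ℕ}

lemma leavesAtDepth_zero (t : NTree n) : leavesAtDepth t 0 = if isLeafB t then 1 else 0 := by
  cases t <;> simp [leavesAtDepth, isLeafB]

@[simp] lemma leavesAtDepth_node_zero (c : Fin n → NTree n) : leavesAtDepth (node c) 0 = 0 := by
  simp [leavesAtDepth]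

@[simp] lemma leavesAtDepth_node_succ (c : Fin n → NTree n) (d : ℕ) :
    leavesAtDepth (node c) (d + 1) = ∑ i, leavesAtDepth (c i) d := by
  simp [leavesAtDepth]

lemma sum_leavesAtDepth_zero (c : Fin n → NTree n) : ∑ i, leavesAtDepth (c i) 0 = muNode c := by
  rw [muNode, Finset.card_eq_sum_ones, Finset.sum_filter]
  exact Finset.sum_congr rfl fun i _ => leavesAtDepth_zero _

lemma lexLt_node {c c' : Fin n → NTree n}
    (h : LexLt (∑ i, leavesAtDepth (c' i)) (∑ i, leavesAtDepth (c i))) :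
    LexLt (leavesAtDepth (node c')) (leavesAtDepth (node c)) :=
  LexLt.of_tail (by simp) (by simpa only [leavesAtDepth_node_succ, ← Finset.sum_apply] using h)

lemma muNode_le_of_injective {c d : Fin n → NTree n} {f : Fin n → Fin n}
    (hf : Function.Injective f) (hleaf : ∀ i, isLeafB (c i) = true → isLeafB (d (f i)) = true) :
    muNode c ≤ muNode d :=
  Finset.card_le_card_of_injOn f (fun i hi => by simpa using hleaf i (by simpa using hi))
    hf.injOn

/-- The permutation of `Fin n` that extends `e` by `i₀ ↦ j₀`. -/
def extendNe {i₀ j₀ : Fin n} (e : {i : Fin n // i ≠ i₀} ≃ {j : Fin n // j ≠ j₀}) :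
    Fin n ≃ Fin n :=
  (Equiv.optionSubtypeNe i₀).symm.trans ((Equiv.optionCongr e).trans (Equiv.optionSubtypeNe j₀))

lemma extendNe_apply_of_ne {i₀ j₀ : Fin n} (e : {i : Fin n // i ≠ i₀} ≃ {j : Fin n // j ≠ j₀})
    {i : Fin n} (h : i ≠ i₀) : extendNe e i = e ⟨i, h⟩ := by
  simp [extendNe, Equiv.optionSubtypeNe_symm_of_ne h]

lemma muNode_exchange_le {cb cb' : Fin n → NTree n} {i₀ j₀ : Fin n}
    (e : {i : Fin n // i ≠ i₀} ≃ {j : Fin n // j ≠ j₀}) :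
    muNode (fun i => if h : i = i₀ then node cb' else cb ((e ⟨i, h⟩) : Fin n)) ≤ muNode cb := by
  refine muNode_le_of_injective (extendNe e).injective fun i hi => ?_
  by_cases h : i = i₀
  · simp [h, isLeafB] at hi
  · simpa [h, extendNe_apply_of_ne e h] using hi

lemma LocalExchange.lexLt {t s : NTree n} (h : LocalExchange t s) :
    LexLt (leavesAtDepth s) (leavesAtDepth t) := by
  obtain ⟨ca, cb, cb', i₀, j₀, e, rfl, -, hmu, -, rfl⟩ := h
  refine lexLt_node (lexLt_of_lt_zero ?_)
  simp only [Finset.sum_apply, sum_leavesAtDepth_zero]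
  exact (muNode_exchange_le e).trans_lt hmu

lemma Exchange.lexLt {t s : NTree n} (h : Exchange t s) :
    LexLt (leavesAtDepth s) (leavesAtDepth t) := by
  induction h with
  | base h => exact h.lexLt
  | congr c i _ ih =>
    refine lexLt_node ?_
    simpa only [Function.apply_update (fun _ => leavesAtDepth)] using
      ih.sum_update (F := fun j => leavesAtDepth (c j))

end NTree

theorem stmt16_general (n : ℕ) (T S : NTree n)
    (h : NTree.Exchange T S) :
    NTree.LexLt (NTree.leavesAtDepth S) (NTree.leavesAtDepth T) :=
  h.lexLt

/-- let `T ∈ 𝕋_{n,k}` and let `S` be obtained from `T` by choosing internal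
nodes `a` (parent) and `b` (child of `a`) with `μ_T(a) > μ_T(b)` and exchanging all
subtrees rooted at children of `a` other than `b` with the subtrees rooted at all but one
child `x` of `b`.  Then the depth vector of `S` is lexicographically strictly smaller
than the depth vector of `T`. -/
theorem stmt16 (n k : ℕ) (T S : NTree n) (hT : T.internals = k)
    (h : NTree.Exchange T S) :
    NTree.LexLt (NTree.leavesAtDepth S) (NTree.leavesAtDepth T) :=
  stmt16_general n T S h
end
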